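/- Let X_1, ..., X_d be Polish spaces, μ_i ∈ P(X_i), let α : [0,1] → [0,∞) be nondecreasing and bounded with μ_0 = α_# Leb_{[0,1]} on X_0 = [α(0), α(1)] ⊆ ℝ, let b : X_1 × ... × X_d → ℝ be continuous and bounded, and set s(x_0, x_1, ..., x_d) = x_0 · b(x_1, ..., x_d). For any π ∈ Γ(μ_0, μ_1, ..., μ_d) with (1,...,d)-marginal γ, one has ∫ s dπ ≤ R_α(b_# γ). Moreover, equality holds if and only if the support of the measure τ_π = ((x_0, x_1, ..., x_d) ↦ (x_0, b(x_1, ..., x_d)))_# π on ℝ² is monotone increasing (i.e., for any two points (x,y), (x',y') in the support, x < x' implies y ≤ y'). -/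

import Mathlib

open MeasureTheory Set

/-- Quantile (generalized inverse c.d.f.) of a probability measure on ℝ. -/
noncomputable def quantile (μ : Measure ℝ) (m : ℝ) : ℝ :=
  sInf {x : ℝ | ENNReal.ofReal m ≤ μ (Iic x)}

/-- Lebesgue measure restricted to `[0,1]`. -/
noncomputable def lebI : Measure ℝ := volume.restrict (Icc (0:ℝ) 1)

/-- The spectral risk measure `R_α(μ) = ∫_0^1 F_μ⁻¹(m) α(m) dm`. -/
noncomputable def specRisk (α : ℝ → ℝ) (μ : Measure ℝ) : ℝ :=
  ∫ m in Icc (0:ℝ) 1, quantile μ m * α m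

/-- Topological support of a measure. -/
def msupport {X : Type*} [TopologicalSpace X] [MeasurableSpace X] (π : Measure X) :
    Set X :=
  {x | ∀ U ∈ nhds x, π U ≠ 0}

/-- A subset of ℝ² is monotone increasing if `x < x'` implies `y ≤ y'` for any two
of its points `(x,y)`, `(x',y')`. -/
def MonotoneIncrSet (S : Set (ℝ × ℝ)) : Prop :=
  ∀ p ∈ S, ∀ q ∈ S, p.1 < q.1 → p.2 ≤ q.2

/-!
Push `π` forward to the law `τ` of `(x₀, b x)` on `ℝ²`: it couples `ρ = α_# Leb` with
`ν = b_# γ`, and `∫ s dπ = ∫ x y dτ`. Hoeffding's formula writes `∫ (x - a)(y - c) dτ` as the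
integral of the upper-orthant function `(s, t) ↦ τ((s, ∞) × (t, ∞))` over `(a, ∞) × (c, ∞)`;
the remaining terms only involve the marginals. The orthant function is bounded by the
Fréchet–Hoeffding bound `min (ρ (s, ∞)) (ν (t, ∞))`, which is attained by the comonotone coupling,
the joint law of the two quantile functions under the uniform law on `(0, 1)`. Since a monotone
`α` is almost everywhere its own quantile function, the comonotone coupling has
`∫ x y = R_α(ν)`. Equality therefore holds iff the bound is attained almost everywhere, and at a
point `(s, t)` it is attained iff one of the two quadrants `(s, ∞) × (-∞, t]` and
`(-∞, s] × (t, ∞)` is null, which is what monotonicity of the support says.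
-/

open scoped ENNReal Topology
open Filter ProbabilityTheory

instance : IsProbabilityMeasure (volume.restrict (Ioo (0:ℝ) 1)) :=
  ⟨by rw [Measure.restrict_apply_univ, Real.volume_Ioo, sub_zero, ENNReal.ofReal_one]⟩

section Quantile

variable {ρ : Measure ℝ} [IsProbabilityMeasure ρ] {m x : ℝ}

lemma ofReal_le_measure_Iic_iff : ENNReal.ofReal m ≤ ρ (Iic x) ↔ m ≤ cdf ρ x := by
  rw [cdf_eq_real, measureReal_def, ENNReal.ofReal_le_iff_le_toReal (measure_ne_top _ _)]

lemma quantile_le_iff (hm : m ∈ Ioo 0 1) : quantile ρ m ≤ x ↔ ENNReal.ofReal m ≤ ρ (Iic x) := by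
  set S := {y : ℝ | ENNReal.ofReal m ≤ ρ (Iic y)}
  have hS : ∀ y, y ∈ S ↔ m ≤ cdf ρ y := fun y => ofReal_le_measure_Iic_iff
  have hne : S.Nonempty := by
    obtain ⟨y, hy⟩ := ((tendsto_order.1 (tendsto_cdf_atTop (μ := ρ))).1 m hm.2).exists
    exact ⟨y, (hS y).2 hy.le⟩
  have hbdd : BddBelow S := by
    obtain ⟨y₀, hy₀⟩ :=
      eventually_atBot.1 ((tendsto_order.1 (tendsto_cdf_atBot (μ := ρ))).2 m hm.1)
    exact ⟨y₀, fun y hy => le_of_not_ge fun hyy₀ => (hy₀ y hyy₀).not_ge ((hS y).1 hy)⟩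
  refine ⟨fun hq => ?_, fun hx => csInf_le hbdd hx⟩
  -- the cdf is right-continuous, so the infimum of `S` belongs to `S`
  have hqS : quantile ρ m ∈ S := by
    rw [hS]
    refine ge_of_tendsto (((cdf ρ).right_continuous _).mono Ioi_subset_Ici_self).tendsto
      (eventually_nhdsWithin_of_forall fun y hy => ?_)
    obtain ⟨z, hzS, hzy⟩ := exists_lt_of_csInf_lt hne hy
    exact ((hS z).1 hzS).trans ((cdf ρ).mono hzy.le)
  exact hqS.trans (measure_mono (Iic_subset_Iic.2 hq))

lemma lt_quantile_iff_cdf_lt (hm : m ∈ Ioo 0 1) : x < quantile ρ m ↔ cdf ρ x < m := by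
  rw [← not_le, quantile_le_iff hm, ofReal_le_measure_Iic_iff, not_le]

lemma monotoneOn_quantile : MonotoneOn (quantile ρ) (Ioo 0 1) := fun _ hm _ hm' hmm' =>
  (quantile_le_iff hm).2 <| (ENNReal.ofReal_le_ofReal hmm').trans ((quantile_le_iff hm').1 le_rfl)

lemma aemeasurable_quantile : AEMeasurable (quantile ρ) (volume.restrict (Ioo 0 1)) :=
  aemeasurable_restrict_of_monotoneOn measurableSet_Ioo monotoneOn_quantile

omit [IsProbabilityMeasure ρ] in
lemma volume_Iic_inter_Ioo_zero_one {c : ℝ} (hc : c ≤ 1) :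
    volume (Iic c ∩ Ioo 0 1) = ENNReal.ofReal c := by
  refine le_antisymm ?_ ?_
  · calc volume (Iic c ∩ Ioo 0 1) ≤ volume (Icc 0 c) :=
          measure_mono fun y hy => ⟨hy.2.1.le, hy.1⟩
      _ = ENNReal.ofReal c := by rw [Real.volume_Icc, sub_zero]
  · calc ENNReal.ofReal c = volume (Ioo 0 c) := by rw [Real.volume_Ioo, sub_zero]
      _ ≤ volume (Iic c ∩ Ioo 0 1) :=
          measure_mono fun y hy => ⟨hy.2.le, hy.1, hy.2.trans_le hc⟩

lemma map_quantile : (volume.restrict (Ioo 0 1)).map (quantile ρ) = ρ := by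
  refine Measure.ext_of_Iic _ _ fun x => ?_
  rw [Measure.map_apply_of_aemeasurable aemeasurable_quantile measurableSet_Iic,
    Measure.restrict_apply' measurableSet_Ioo]
  have hset : quantile ρ ⁻¹' Iic x ∩ Ioo 0 1 = Iic (cdf ρ x) ∩ Ioo 0 1 := by
    ext m
    simp only [mem_inter_iff, mem_preimage, mem_Iic]
    exact and_congr_left fun hm => (quantile_le_iff hm).trans ofReal_le_measure_Iic_iff
  rw [hset, volume_Iic_inter_Ioo_zero_one (cdf_le_one _ _), cdf_eq_real, ofReal_measureReal]

lemma measure_Ioi_eq_ofReal_one_sub_cdf (x : ℝ) : ρ (Ioi x) = ENNReal.ofReal (1 - cdf ρ x) := by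
  rw [← compl_Iic, prob_compl_eq_one_sub measurableSet_Iic, ENNReal.ofReal_sub _ (cdf_nonneg _ _),
    ENNReal.ofReal_one, cdf_eq_real, ofReal_measureReal]

end Quantile

/-- At a continuity point `m` of `f`, the sublevel set `{f ≤ f m}` has mass at least `m`, while
`{f ≤ x}` has mass at most `u < m` whenever `x < f u`. -/
lemma quantile_map_ae_eq {f : ℝ → ℝ} (hf : MonotoneOn f (Ioo 0 1)) :
    ∀ᵐ m ∂volume.restrict (Ioo 0 1), quantile ((volume.restrict (Ioo 0 1)).map f) m = f m := by
  have hfm : AEMeasurable f (volume.restrict (Ioo 0 1)) :=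
    aemeasurable_restrict_of_monotoneOn measurableSet_Ioo hf
  have := Measure.isProbabilityMeasure_map hfm
  have hIic (x : ℝ) :
      (volume.restrict (Ioo 0 1)).map f (Iic x) = volume (f ⁻¹' Iic x ∩ Ioo 0 1) := by
    rw [Measure.map_apply_of_aemeasurable hfm measurableSet_Iic,
      Measure.restrict_apply' measurableSet_Ioo]
  have hcont : ∀ᵐ m ∂volume, m ∈ Ioo (0:ℝ) 1 → ContinuousWithinAt f (Ioo 0 1) m := by
    refine ae_iff.2 (Set.Countable.measure_zero ?_ _)
    simpa only [Classical.not_imp] using hf.countable_not_continuousWithinAt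
  filter_upwards [ae_restrict_mem measurableSet_Ioo,
    (ae_restrict_iff' measurableSet_Ioo).2 hcont] with m hm hcm
  set q := quantile ((volume.restrict (Ioo 0 1)).map f) m
  refine le_antisymm ?_ ?_
  · rw [quantile_le_iff hm, hIic]
    calc ENNReal.ofReal m = volume (Ioc 0 m) := by rw [Real.volume_Ioc, sub_zero]
      _ ≤ volume (f ⁻¹' Iic (f m) ∩ Ioo 0 1) := measure_mono fun u hu =>
        ⟨hf ⟨hu.1, hu.2.trans_lt hm.2⟩ hm hu.2, hu.1, hu.2.trans_lt hm.2⟩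
  · have hleft : ∀ u ∈ Ioo 0 m, f u ≤ q := by
      intro u hu
      by_contra! hqu
      have hsub : f ⁻¹' Iic q ∩ Ioo 0 1 ⊆ Ioo 0 u := fun w hw =>
        ⟨hw.2.1, lt_of_not_ge fun huw =>
          (hqu.trans_le (hf ⟨hu.1, hu.2.trans hm.2⟩ hw.2 huw)).not_ge hw.1⟩
      have hmass :=
        (((quantile_le_iff hm).1 le_rfl).trans_eq (hIic q)).trans (measure_mono hsub)
      rw [Real.volume_Ioo, sub_zero, ENNReal.ofReal_le_ofReal_iff hu.1.le] at hmass
      exact hmass.not_gt hu.2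
    refine le_of_tendsto ((hcm.continuousAt (Ioo_mem_nhds hm.1 hm.2)).tendsto.mono_left
      (nhdsWithin_le_nhds (s := Iio m))) ?_
    filter_upwards [Ioo_mem_nhdsLT hm.1] with u hu using hleft u hu

lemma lebI_eq : lebI = volume.restrict (Ioo 0 1) :=
  (Measure.restrict_congr_set Ioo_ae_eq_Icc).symm


noncomputable def comonotoneCoupling (ρ ν : Measure ℝ) : Measure (ℝ × ℝ) :=
  (volume.restrict (Ioo 0 1)).map fun m => (quantile ρ m, quantile ν m)

namespace comonotoneCoupling

variable {ρ ν : Measure ℝ} [IsProbabilityMeasure ρ] [IsProbabilityMeasure ν]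

lemma aemeasurable_quantile_prod :
    AEMeasurable (fun m => (quantile ρ m, quantile ν m)) (volume.restrict (Ioo 0 1)) :=
  aemeasurable_quantile.prodMk aemeasurable_quantile

instance : IsProbabilityMeasure (comonotoneCoupling ρ ν) :=
  Measure.isProbabilityMeasure_map aemeasurable_quantile_prod

lemma map_fst : (comonotoneCoupling ρ ν).map Prod.fst = ρ := by
  rw [comonotoneCoupling, AEMeasurable.map_map_of_aemeasurable measurable_fst.aemeasurable
    aemeasurable_quantile_prod]
  exact map_quantile

lemma map_snd : (comonotoneCoupling ρ ν).map Prod.snd = ν := by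
  rw [comonotoneCoupling, AEMeasurable.map_map_of_aemeasurable measurable_snd.aemeasurable
    aemeasurable_quantile_prod]
  exact map_quantile

lemma apply_Ioi_prod_Ioi (s t : ℝ) :
    comonotoneCoupling ρ ν (Ioi s ×ˢ Ioi t) = min (ρ (Ioi s)) (ν (Ioi t)) := by
  rw [comonotoneCoupling, Measure.map_apply_of_aemeasurable aemeasurable_quantile_prod
    (measurableSet_Ioi.prod measurableSet_Ioi), Measure.restrict_apply' measurableSet_Ioo]
  have hset : (fun m => (quantile ρ m, quantile ν m)) ⁻¹' (Ioi s ×ˢ Ioi t) ∩ Ioo 0 1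
      = Ioi (max (cdf ρ s) (cdf ν t)) ∩ Ioo 0 1 := by
    ext m
    simp only [mem_inter_iff, mem_preimage, mem_prod, mem_Ioi, max_lt_iff]
    exact and_congr_left fun hm =>
      and_congr (lt_quantile_iff_cdf_lt hm) (lt_quantile_iff_cdf_lt hm)
  rw [hset, Ioi_inter_Ioo, max_eq_left (le_max_of_le_left (cdf_nonneg _ _)), Real.volume_Ioo,
    measure_Ioi_eq_ofReal_one_sub_cdf, measure_Ioi_eq_ofReal_one_sub_cdf, ← ENNReal.ofReal_min,
    min_sub_sub_left]

lemma integral_eq {g : ℝ × ℝ → ℝ} (hg : AEStronglyMeasurable g (comonotoneCoupling ρ ν)) :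
    ∫ p, g p ∂comonotoneCoupling ρ ν = ∫ m in Ioo 0 1, g (quantile ρ m, quantile ν m) :=
  integral_map aemeasurable_quantile_prod hg

end comonotoneCoupling

section SpectralFunction

variable {α : ℝ → ℝ} (hα : MonotoneOn α (Icc 0 1))
include hα

lemma quantile_lebI_map_ae_eq :
    ∀ᵐ m ∂volume.restrict (Ioo 0 1), quantile (lebI.map α) m = α m := by
  rw [lebI_eq]
  exact quantile_map_ae_eq (hα.mono Ioo_subset_Icc_self)

lemma ae_map_lebI_mem_Icc : ∀ᵐ x ∂lebI.map α, x ∈ Icc (α 0) (α 1) := by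
  have h01 : (0:ℝ) ≤ 1 := zero_le_one
  refine (ae_map_iff (aemeasurable_restrict_of_monotoneOn measurableSet_Icc hα)
    measurableSet_Icc).2 ((ae_restrict_mem measurableSet_Icc).mono fun u hu => ?_)
  exact ⟨hα (left_mem_Icc.2 h01) hu hu.1, hα hu (right_mem_Icc.2 h01) hu.2⟩

lemma specRisk_eq_integral_comonotoneCoupling (ν : Measure ℝ) [IsProbabilityMeasure ν] :
    specRisk α ν = ∫ p, p.1 * p.2 ∂comonotoneCoupling (lebI.map α) ν := by
  have : IsProbabilityMeasure (lebI.map α) := by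
    rw [lebI_eq]
    exact Measure.isProbabilityMeasure_map
      (aemeasurable_restrict_of_monotoneOn measurableSet_Ioo (hα.mono Ioo_subset_Icc_self))
  have hmul : Continuous fun p : ℝ × ℝ => p.1 * p.2 := by fun_prop
  rw [comonotoneCoupling.integral_eq hmul.aestronglyMeasurable, specRisk,
    ← Measure.restrict_congr_set Ioo_ae_eq_Icc]
  refine integral_congr_ae ?_
  filter_upwards [quantile_lebI_map_ae_eq hα] with m hm
  rw [hm, mul_comm]

end SpectralFunction

section Hoeffding

variable {τ : Measure (ℝ × ℝ)} [SFinite τ]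

lemma measurableSet_setOf_lt_and_lt :
    MeasurableSet {q : (ℝ × ℝ) × (ℝ × ℝ) | q.2.1 < q.1.1 ∧ q.2.2 < q.1.2} :=
  (measurableSet_lt measurable_snd.fst measurable_fst.fst).inter
    (measurableSet_lt measurable_snd.snd measurable_fst.snd)

lemma measurable_measure_Ioi_prod_Ioi : Measurable fun z : ℝ × ℝ => τ (Ioi z.1 ×ˢ Ioi z.2) :=
  measurable_measure_prodMk_right measurableSet_setOf_lt_and_lt

omit [SFinite τ] in
lemma volume_Iio_prod_Iio_inter_Ioi_prod_Ioi {a c x y : ℝ} (ha : a ≤ x) :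
    volume (Iio x ×ˢ Iio y ∩ Ioi a ×ˢ Ioi c) = ENNReal.ofReal ((x - a) * (y - c)) := by
  rw [prod_inter_prod, Iio_inter_Ioi, Iio_inter_Ioi, Measure.volume_eq_prod, Measure.prod_prod,
    Real.volume_Ioo, Real.volume_Ioo, ENNReal.ofReal_mul (sub_nonneg.2 ha)]

/-- Hoeffding's formula: `(x - a)(y - c)` is the area of `(a, x) × (c, y)`, and Tonelli exchanges
the two integrations. -/
lemma lintegral_ofReal_sub_mul_sub {a c : ℝ} (ha : ∀ᵐ p ∂τ, a ≤ p.1) :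
    ∫⁻ p, ENNReal.ofReal ((p.1 - a) * (p.2 - c)) ∂τ
      = ∫⁻ z in Ioi a ×ˢ Ioi c, τ (Ioi z.1 ×ˢ Ioi z.2) := by
  calc ∫⁻ p, ENNReal.ofReal ((p.1 - a) * (p.2 - c)) ∂τ
      = ∫⁻ p, volume.restrict (Ioi a ×ˢ Ioi c) (Iio p.1 ×ˢ Iio p.2) ∂τ := by
        refine lintegral_congr_ae (ha.mono fun p hp => ?_)
        beta_reduce
        rw [Measure.restrict_apply (measurableSet_Iio.prod measurableSet_Iio),
          volume_Iio_prod_Iio_inter_Ioi_prod_Ioi hp]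
    _ = (τ.prod (volume.restrict (Ioi a ×ˢ Ioi c))) _ :=
        (Measure.prod_apply measurableSet_setOf_lt_and_lt).symm
    _ = _ := Measure.prod_apply_symm measurableSet_setOf_lt_and_lt

end Hoeffding

lemma Continuous.integrable_of_ae_mem_isCompact {X E : Type*} [TopologicalSpace X] [T2Space X]
    [MeasurableSpace X] [OpensMeasurableSpace X] [NormedAddCommGroup E] {μ : Measure X}
    [IsFiniteMeasureOnCompacts μ] {f : X → E} {K : Set X} (hf : Continuous f) (hK : IsCompact K)
    (h : ∀ᵐ x ∂μ, x ∈ K) : Integrable f μ := by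
  rw [← Measure.restrict_eq_self_of_ae_mem h]
  exact hf.continuousOn.integrableOn_compact hK

lemma MeasureTheory.lintegral_eq_lintegral_iff_ae_eq_of_le {α : Type*} [MeasurableSpace α]
    {μ : Measure α} {f g : α → ℝ≥0∞} (hfg : ∀ x, f x ≤ g x) (hg : AEMeasurable g μ)
    (hg_fin : ∫⁻ x, g x ∂μ ≠ ⊤) : ∫⁻ x, f x ∂μ = ∫⁻ x, g x ∂μ ↔ f =ᵐ[μ] g :=
  ⟨fun h => ae_eq_of_ae_le_of_lintegral_le (ae_of_all _ hfg) (h ▸ hg_fin) hg h.ge,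
    lintegral_congr_ae⟩

section Couplings

variable {τ : Measure (ℝ × ℝ)} {a A c D : ℝ}

lemma measure_Ioi_prod_Ioi_le_min (s t : ℝ) :
    τ (Ioi s ×ˢ Ioi t) ≤ min (τ.map Prod.fst (Ioi s)) (τ.map Prod.snd (Ioi t)) := by
  rw [Measure.map_apply measurable_fst measurableSet_Ioi,
    Measure.map_apply measurable_snd measurableSet_Ioi]
  exact le_min (measure_mono fun p hp => hp.1) (measure_mono fun p hp => hp.2)

instance [IsProbabilityMeasure τ] : IsProbabilityMeasure (τ.map Prod.fst) :=
  Measure.isProbabilityMeasure_map measurable_fst.aemeasurable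

instance [IsProbabilityMeasure τ] : IsProbabilityMeasure (τ.map Prod.snd) :=
  Measure.isProbabilityMeasure_map measurable_snd.aemeasurable

variable (hρ : ∀ᵐ x ∂τ.map Prod.fst, x ∈ Icc a A) (hν : ∀ᵐ y ∂τ.map Prod.snd, y ∈ Icc c D)
include hρ hν

lemma ae_mem_Icc_prod_Icc : ∀ᵐ p ∂τ, p ∈ Icc a A ×ˢ Icc c D :=
  (ae_of_ae_map measurable_fst.aemeasurable hρ).and (ae_of_ae_map measurable_snd.aemeasurable hν)

variable [IsProbabilityMeasure τ]

lemma ofReal_integral_sub_mul_sub :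
    ENNReal.ofReal (∫ p, (p.1 - a) * (p.2 - c) ∂τ)
      = ∫⁻ z in Ioi a ×ˢ Ioi c, τ (Ioi z.1 ×ˢ Ioi z.2) := by
  have hK := ae_mem_Icc_prod_Icc hρ hν
  rw [← lintegral_ofReal_sub_mul_sub (hK.mono fun p hp => hp.1.1)]
  exact ofReal_integral_eq_lintegral_ofReal
    ((by fun_prop : Continuous fun p : ℝ × ℝ => (p.1 - a) * (p.2 - c))
      |>.integrable_of_ae_mem_isCompact (isCompact_Icc.prod isCompact_Icc) hK)
    (hK.mono fun p hp => mul_nonneg (sub_nonneg.2 hp.1.1) (sub_nonneg.2 hp.2.1))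

lemma setLIntegral_measure_Ioi_prod_Ioi_ne_top :
    ∫⁻ z in Ioi a ×ˢ Ioi c, τ (Ioi z.1 ×ˢ Ioi z.2) ≠ ⊤ :=
  ofReal_integral_sub_mul_sub hρ hν ▸ ENNReal.ofReal_ne_top

lemma integral_fst_mul_snd_eq :
    ∫ p, p.1 * p.2 ∂τ = (∫⁻ z in Ioi a ×ˢ Ioi c, τ (Ioi z.1 ×ˢ Ioi z.2)).toReal
      + c * ∫ x, x ∂τ.map Prod.fst + a * ∫ y, y ∂τ.map Prod.snd - a * c := by
  have hK := ae_mem_Icc_prod_Icc hρ hν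
  have hint {f : ℝ × ℝ → ℝ} (hf : Continuous f) : Integrable f τ :=
    hf.integrable_of_ae_mem_isCompact (isCompact_Icc.prod isCompact_Icc) hK
  have hexpand : ∀ p : ℝ × ℝ, (p.1 - a) * (p.2 - c) = p.1 * p.2 - (c * p.1 + a * p.2 - a * c) :=
    fun p => by ring
  rw [← ofReal_integral_sub_mul_sub hρ hν, ENNReal.toReal_ofReal (integral_nonneg_of_ae
      (hK.mono fun p hp => mul_nonneg (sub_nonneg.2 hp.1.1) (sub_nonneg.2 hp.2.1))),
    integral_map measurable_fst.aemeasurable (f := fun x => x) aestronglyMeasurable_id,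
    integral_map measurable_snd.aemeasurable (f := fun x => x) aestronglyMeasurable_id]
  simp_rw [hexpand]
  rw [integral_sub (hint (by fun_prop)) (hint (by fun_prop)),
    integral_sub (hint (by fun_prop)) (integrable_const _),
    integral_add (hint (by fun_prop)) (hint (by fun_prop)), integral_const_mul, integral_const_mul,
    integral_const]
  simp only [probReal_univ, smul_eq_mul, one_mul]
  ring

theorem integral_fst_mul_snd_le_comonotoneCoupling :
    ∫ p, p.1 * p.2 ∂τ ≤ ∫ p, p.1 * p.2 ∂comonotoneCoupling (τ.map Prod.fst) (τ.map Prod.snd) := by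
  set M := comonotoneCoupling (τ.map Prod.fst) (τ.map Prod.snd)
  have hMρ : ∀ᵐ x ∂M.map Prod.fst, x ∈ Icc a A := by rwa [comonotoneCoupling.map_fst]
  have hMν : ∀ᵐ y ∂M.map Prod.snd, y ∈ Icc c D := by rwa [comonotoneCoupling.map_snd]
  rw [integral_fst_mul_snd_eq hρ hν, integral_fst_mul_snd_eq hMρ hMν, comonotoneCoupling.map_fst,
    comonotoneCoupling.map_snd]
  gcongr ?_ + _ + _ - _
  refine ENNReal.toReal_mono (setLIntegral_measure_Ioi_prod_Ioi_ne_top hMρ hMν)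
    (lintegral_mono fun z => ?_)
  rw [comonotoneCoupling.apply_Ioi_prod_Ioi]
  exact measure_Ioi_prod_Ioi_le_min z.1 z.2

theorem integral_fst_mul_snd_eq_comonotoneCoupling_iff :
    ∫ p, p.1 * p.2 ∂τ = ∫ p, p.1 * p.2 ∂comonotoneCoupling (τ.map Prod.fst) (τ.map Prod.snd) ↔
      ∀ᵐ z ∂volume.restrict (Ioi a ×ˢ Ioi c),
        τ (Ioi z.1 ×ˢ Ioi z.2) = min (τ.map Prod.fst (Ioi z.1)) (τ.map Prod.snd (Ioi z.2)) := by
  set M := comonotoneCoupling (τ.map Prod.fst) (τ.map Prod.snd)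
  have hMρ : ∀ᵐ x ∂M.map Prod.fst, x ∈ Icc a A := by rwa [comonotoneCoupling.map_fst]
  have hMν : ∀ᵐ y ∂M.map Prod.snd, y ∈ Icc c D := by rwa [comonotoneCoupling.map_snd]
  have hM : (fun z : ℝ × ℝ => M (Ioi z.1 ×ˢ Ioi z.2))
      = fun z => min (τ.map Prod.fst (Ioi z.1)) (τ.map Prod.snd (Ioi z.2)) :=
    funext fun z => comonotoneCoupling.apply_Ioi_prod_Ioi z.1 z.2
  rw [integral_fst_mul_snd_eq hρ hν, integral_fst_mul_snd_eq hMρ hMν, comonotoneCoupling.map_fst,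
    comonotoneCoupling.map_snd, sub_left_inj, add_left_inj, add_left_inj,
    ENNReal.toReal_eq_toReal_iff' (setLIntegral_measure_Ioi_prod_Ioi_ne_top hρ hν)
      (setLIntegral_measure_Ioi_prod_Ioi_ne_top hMρ hMν), hM]
  exact lintegral_eq_lintegral_iff_ae_eq_of_le (fun z => measure_Ioi_prod_Ioi_le_min z.1 z.2)
    (hM ▸ measurable_measure_Ioi_prod_Ioi).aemeasurable
    (hM ▸ setLIntegral_measure_Ioi_prod_Ioi_ne_top hMρ hMν)

end Couplings

lemma msupport_eq_support {X : Type*} [TopologicalSpace X] [MeasurableSpace X] (μ : Measure X) :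
    msupport μ = μ.support := by
  ext x
  simp only [msupport, mem_ofPred_eq, Measure.mem_support_iff_forall, pos_iff_ne_zero]

section Support

variable {τ : Measure (ℝ × ℝ)} [IsFiniteMeasure τ]

lemma measure_Ioi_prod_Ioi_eq_min_iff (s t : ℝ) :
    τ (Ioi s ×ˢ Ioi t) = min (τ.map Prod.fst (Ioi s)) (τ.map Prod.snd (Ioi t))
      ↔ τ (Ioi s ×ˢ Iic t) = 0 ∨ τ (Iic s ×ˢ Ioi t) = 0 := by
  have hfst : τ.map Prod.fst (Ioi s) = τ (Ioi s ×ˢ Ioi t) + τ (Ioi s ×ˢ Iic t) := by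
    rw [Measure.map_apply measurable_fst measurableSet_Ioi,
      ← measure_inter_add_sdiff _ (measurable_snd measurableSet_Ioi), sdiff_eq, ← preimage_compl,
      compl_Ioi]
    rfl
  have hsnd : τ.map Prod.snd (Ioi t) = τ (Ioi s ×ˢ Ioi t) + τ (Iic s ×ˢ Ioi t) := by
    rw [Measure.map_apply measurable_snd measurableSet_Ioi,
      ← measure_inter_add_sdiff _ (measurable_fst measurableSet_Ioi), sdiff_eq, ← preimage_compl,
      compl_Ioi, inter_comm, inter_comm (Prod.snd ⁻¹' Ioi t)]
    rfl
  rw [hfst, hsnd, min_add_add_left, ← min_eq_zero]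
  refine ⟨fun h => ?_, fun h => by rw [h, add_zero]⟩
  exact (ENNReal.add_right_inj (measure_ne_top τ _)).1 (h.symm.trans (add_zero _).symm)

lemma measure_Ioi_prod_Ioi_eq_min_of_monotoneIncrSet (h : MonotoneIncrSet τ.support) (s t : ℝ) :
    τ (Ioi s ×ˢ Ioi t) = min (τ.map Prod.fst (Ioi s)) (τ.map Prod.snd (Ioi t)) := by
  rw [measure_Ioi_prod_Ioi_eq_min_iff]
  by_contra! hpos
  obtain ⟨u, hu, hu_supp⟩ := Measure.nonempty_inter_support_of_pos (pos_iff_ne_zero.2 hpos.1)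
  obtain ⟨v, hv, hv_supp⟩ := Measure.nonempty_inter_support_of_pos (pos_iff_ne_zero.2 hpos.2)
  exact lt_irrefl t (hv.2.trans_le ((h v hv_supp u hu_supp (hv.1.trans_lt hu.1)).trans hu.2))

/-- Support points `p`, `q` with `p.1 < q.1` and `q.2 < p.2` give positive mass to both quadrants
of `measure_Ioi_prod_Ioi_eq_min_iff` at every `z` of the open box between them. -/
lemma monotoneIncrSet_support_of_ae_eq_min {a c : ℝ} (hτ : ∀ᵐ p ∂τ, p ∈ Ici a ×ˢ Ici c)
    (h : ∀ᵐ z ∂volume.restrict (Ioi a ×ˢ Ioi c),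
      τ (Ioi z.1 ×ˢ Ioi z.2) = min (τ.map Prod.fst (Ioi z.1)) (τ.map Prod.snd (Ioi z.2))) :
    MonotoneIncrSet τ.support := by
  intro p hp q hq hpq
  by_contra! hqp
  have hsupp := Measure.support_subset_of_isClosed (isClosed_Ici.prod isClosed_Ici) hτ
  have hbox : Ioo p.1 q.1 ×ˢ Ioo q.2 p.2 ⊆ Ioi a ×ˢ Ioi c := fun z hz =>
    ⟨(hsupp hp).1.trans_lt hz.1.1, (hsupp hq).2.trans_lt hz.2.1⟩
  have hbox_pos : volume (Ioo p.1 q.1 ×ˢ Ioo q.2 p.2) ≠ 0 := by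
    rw [Measure.volume_eq_prod, Measure.prod_prod, Real.volume_Ioo, Real.volume_Ioo]
    exact mul_ne_zero (ENNReal.ofReal_pos.2 (sub_pos.2 hpq)).ne'
      (ENNReal.ofReal_pos.2 (sub_pos.2 hqp)).ne'
  obtain ⟨z, hz, hz_eq⟩ := Measure.exists_mem_of_measure_ne_zero_of_ae hbox_pos
    (ae_restrict_of_ae_restrict_of_subset hbox h)
  rcases (measure_Ioi_prod_Ioi_eq_min_iff z.1 z.2).1 hz_eq with h0 | h0
  · refine ((Measure.mem_support_iff_forall q).1 hq _ ?_).ne' h0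
    exact mem_of_superset ((isOpen_Ioi.prod isOpen_Iio).mem_nhds ⟨hz.1.2, hz.2.1⟩)
      (prod_mono subset_rfl Iio_subset_Iic_self)
  · refine ((Measure.mem_support_iff_forall p).1 hp _ ?_).ne' h0
    exact mem_of_superset ((isOpen_Iio.prod isOpen_Ioi).mem_nhds ⟨hz.1.1, hz.2.2⟩)
      (prod_mono Iio_subset_Iic_self subset_rfl)

theorem monotoneIncrSet_support_iff {a c : ℝ} (hτ : ∀ᵐ p ∂τ, p ∈ Ici a ×ˢ Ici c) :
    MonotoneIncrSet τ.support ↔ ∀ᵐ z ∂volume.restrict (Ioi a ×ˢ Ioi c),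
      τ (Ioi z.1 ×ˢ Ioi z.2) = min (τ.map Prod.fst (Ioi z.1)) (τ.map Prod.snd (Ioi z.2)) :=
  ⟨fun h => ae_of_all _ fun z => measure_Ioi_prod_Ioi_eq_min_of_monotoneIncrSet h z.1 z.2,
    monotoneIncrSet_support_of_ae_eq_min hτ⟩

end Support

theorem stmt5_general (d : ℕ) (X : Fin d → Type*) [∀ i, MeasurableSpace (X i)]
    [∀ i, TopologicalSpace (X i)] [∀ i, PolishSpace (X i)] [∀ i, BorelSpace (X i)]
    (α : ℝ → ℝ) (hα_mono : MonotoneOn α (Icc 0 1))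
    (b : (∀ i, X i) → ℝ) (hb_cont : Continuous b) (hb_bdd : ∃ C, ∀ z, |b z| ≤ C)
    (π : Measure (ℝ × ∀ i, X i)) (hπ_prob : IsProbabilityMeasure π)
    (hπ0 : π.map Prod.fst = lebI.map α)
    (γ : Measure (∀ i, X i)) (hγ : γ = π.map Prod.snd) :
    (∫ p, p.1 * b p.2 ∂π ≤ specRisk α (γ.map b)) ∧
    ((∫ p, p.1 * b p.2 ∂π = specRisk α (γ.map b)) ↔
      MonotoneIncrSet (msupport (π.map (fun p => (p.1, b p.2))))) := by
  obtain ⟨C, hC⟩ := hb_bdd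
  have hF : Measurable fun p : ℝ × ∀ i, X i => (p.1, b p.2) :=
    measurable_fst.prodMk (hb_cont.measurable.comp measurable_snd)
  set τ := π.map fun p => (p.1, b p.2)
  have : IsProbabilityMeasure τ := Measure.isProbabilityMeasure_map hF.aemeasurable
  have hτ_fst : τ.map Prod.fst = lebI.map α := by rw [Measure.map_map measurable_fst hF]; exact hπ0
  have hτ_snd : τ.map Prod.snd = γ.map b := by
    rw [Measure.map_map measurable_snd hF, hγ, Measure.map_map hb_cont.measurable measurable_snd]
    rfl
  have hρ : ∀ᵐ x ∂τ.map Prod.fst, x ∈ Icc (α 0) (α 1) := hτ_fst ▸ ae_map_lebI_mem_Icc hα_mono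
  have hν : ∀ᵐ y ∂τ.map Prod.snd, y ∈ Icc (-C) C := hτ_snd ▸
    (ae_map_iff hb_cont.measurable.aemeasurable measurableSet_Icc).2
      (ae_of_all _ fun z => abs_le.1 (hC z))
  have hint : ∫ p, p.1 * b p.2 ∂π = ∫ p, p.1 * p.2 ∂τ :=
    (integral_map hF.aemeasurable
      (by fun_prop : Continuous fun p : ℝ × ℝ => p.1 * p.2).aestronglyMeasurable).symm
  have hτ_Ici : ∀ᵐ p ∂τ, p ∈ Ici (α 0) ×ˢ Ici (-C) :=
    (ae_mem_Icc_prod_Icc hρ hν).mono fun p hp => ⟨hp.1.1, hp.2.1⟩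
  rw [hint, ← hτ_snd, specRisk_eq_integral_comonotoneCoupling hα_mono, ← hτ_fst,
    msupport_eq_support, monotoneIncrSet_support_iff hτ_Ici]
  exact ⟨integral_fst_mul_snd_le_comonotoneCoupling hρ hν,
    integral_fst_mul_snd_eq_comonotoneCoupling_iff hρ hν⟩

/-- for any `π ∈ Γ(μ_0, μ_1, ..., μ_d)` (with `μ_0 = α_# Leb`) and its
`(1,...,d)`-marginal `γ`, one has `∫ x_0 b(x_1,...,x_d) dπ ≤ R_α(b_# γ)`, with
equality iff `τ_π = ((x_0,x) ↦ (x_0, b x))_# π` has monotone increasing support. -/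
theorem stmt5 (d : ℕ) (X : Fin d → Type*) [∀ i, MeasurableSpace (X i)]
    [∀ i, TopologicalSpace (X i)] [∀ i, PolishSpace (X i)] [∀ i, BorelSpace (X i)]
    (μ : ∀ i, Measure (X i)) (hμ : ∀ i, IsProbabilityMeasure (μ i))
    (α : ℝ → ℝ) (hα_mono : MonotoneOn α (Icc 0 1))
    (hα_nonneg : ∀ m ∈ Icc (0:ℝ) 1, 0 ≤ α m)
    (b : (∀ i, X i) → ℝ) (hb_cont : Continuous b) (hb_bdd : ∃ C, ∀ z, |b z| ≤ C)
    (π : Measure (ℝ × ∀ i, X i)) (hπ_prob : IsProbabilityMeasure π)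
    (hπ0 : π.map Prod.fst = lebI.map α)
    (hπi : ∀ i, π.map (fun p => p.2 i) = μ i)
    (γ : Measure (∀ i, X i)) (hγ : γ = π.map Prod.snd) :
    (∫ p, p.1 * b p.2 ∂π ≤ specRisk α (γ.map b)) ∧
    ((∫ p, p.1 * b p.2 ∂π = specRisk α (γ.map b)) ↔
      MonotoneIncrSet (msupport (π.map (fun p => (p.1, b p.2))))) :=
  stmt5_general d X α hα_mono b hb_cont hb_bdd π hπ_prob hπ0 γ hγ
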